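/- arXiv:2102.11991 — 6 statements merged into one kernel-verified Lean document; each statement's English description precedes it below -/
import Mathlib

section
/- The structure (B5, min, max, ⪯, →, negation), where min and max are taken with respect to the linear order on B5, a → b is defined as 1111 if a ⪯ b and b otherwise, and the negation maps 1111 to 0000 and every other element to 1111, is a da Costa algebra. -/
namespace RLTLPaper

/-- The five truth values of rLTL: `0000 ≺ 0001 ≺ 0011 ≺ 0111 ≺ 1111`. -/
inductive B5 where
  | e0000 : B5
  | e0001 : B5
  | e0011 : B5
  | e0111 : B5
  | e1111 : B5
  deriving DecidableEq

namespace B5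

/-- Rank of a truth value in the linear order `0000 ≺ 0001 ≺ 0011 ≺ 0111 ≺ 1111`. -/
def toNat : B5 → ℕ
  | .e0000 => 0
  | .e0001 => 1
  | .e0011 => 2
  | .e0111 => 3
  | .e1111 => 4

/-- The order `⪯` on `B5`: `0000 ≺ 0001 ≺ 0011 ≺ 0111 ≺ 1111`. -/
def le (a b : B5) : Prop := toNat a ≤ toNat b

/-- The strict order `≺` on `B5`. -/
def lt (a b : B5) : Prop := toNat a < toNat b

/-- Minimum (meet) with respect to the linear order on `B5`. -/
def min (a b : B5) : B5 := if toNat a ≤ toNat b then a else b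

/-- Maximum (join) with respect to the linear order on `B5`. -/
def max (a b : B5) : B5 := if toNat a ≤ toNat b then b else a

/-- The da Costa implication on `B5`: `a → b = 1111` if `a ⪯ b`, and `b` otherwise. -/
def imp (a b : B5) : B5 := if toNat a ≤ toNat b then .e1111 else b

/-- The da Costa negation on `B5`: `1111 ↦ 0000`, all other elements to `1111`. -/
def neg (a : B5) : B5 := if a = .e1111 then .e0000 else .e1111

end B5

/-- A da Costa algebra `(A, ⊓, ⊔, ⪯, →, ¬)`: a distributive lattice (with `⪯`
the order derived from `⊓` and `⊔`), in which `→` is the residual of `⊓`,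
`a ⪯ b ⊔ ¬b` for all `a, b`, and `¬a ⪯ b` whenever `c ⊔ ¬c ⪯ a ⊔ b`. -/
structure IsDaCostaAlgebra (A : Type*) (meet join : A → A → A) (le : A → A → Prop)
    (imp : A → A → A) (neg : A → A) : Prop where
  meet_comm : ∀ a b, meet a b = meet b a
  join_comm : ∀ a b, join a b = join b a
  meet_assoc : ∀ a b c, meet (meet a b) c = meet a (meet b c)
  join_assoc : ∀ a b c, join (join a b) c = join a (join b c)
  absorb_meet_join : ∀ a b, meet a (join a b) = a
  absorb_join_meet : ∀ a b, join a (meet a b) = a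
  distrib : ∀ a b c, meet a (join b c) = join (meet a b) (meet a c)
  le_iff_meet : ∀ a b, le a b ↔ meet a b = a
  le_iff_join : ∀ a b, le a b ↔ join a b = b
  residual : ∀ a b c, le a (imp b c) ↔ le (meet a b) c
  le_join_neg : ∀ a b, le a (join b (neg b))
  neg_le_of_le : ∀ a b c, le (join c (neg c)) (join a b) → le (neg a) b

instance : Fintype B5 :=
  ⟨⟨{.e0000, .e0001, .e0011, .e0111, .e1111}, by decide⟩, by intro x; cases x <;> decide⟩

instance : DecidablePred (fun p : B5 × B5 => B5.le p.1 p.2) := fun _ => by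
  unfold B5.le; infer_instance

instance (a b : B5) : Decidable (B5.le a b) := by unfold B5.le; infer_instance

/-- `(B5, min, max, ⪯, →, ¬)` with min/max taken w.r.t. the linear
order, `a → b = 1111` if `a ⪯ b` and `b` otherwise, and negation mapping `1111`
to `0000` and every other element to `1111`, is a da Costa algebra. -/
theorem B5.isDaCostaAlgebra :
    IsDaCostaAlgebra B5 B5.min B5.max B5.le B5.imp B5.neg := by
  constructor <;> decide

end RLTLPaper
end

section
/- For any infinite word σ over 2^P and atomic proposition p, the rLTL valuation of ⊡p equals the 4-tuple of LTL valuations (W(σ, □p), W(σ, ◇□p), W(σ, □◇p), W(σ, ◇p)). -/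
namespace RLTLPaper

/-- Suffix of an infinite word: `shift σ i` is the word `σ(i) σ(i+1) ...`. -/
def shift {P : Type*} (σ : ℕ → Set P) (i : ℕ) : ℕ → Set P := fun j => σ (i + j)

/-- Syntax of LTL formulae over atomic propositions `P`. -/
inductive LTL (P : Type*) where
  | tt : LTL P
  | ff : LTL P
  | atom : P → LTL P
  | not : LTL P → LTL P
  | and : LTL P → LTL P → LTL P
  | or : LTL P → LTL P → LTL P
  | imp : LTL P → LTL P → LTL P
  | next : LTL P → LTL P
  | ev : LTL P → LTL P
  | always : LTL P → LTL P
  | until_ : LTL P → LTL P → LTL P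
  | release : LTL P → LTL P → LTL P
  deriving DecidableEq

/-- LTL semantics: `W φ σ` holds iff the infinite word `σ` satisfies `φ`. -/
def W {P : Type*} : LTL P → (ℕ → Set P) → Prop
  | .tt, _ => True
  | .ff, _ => False
  | .atom p, σ => p ∈ σ 0
  | .not φ, σ => ¬ W φ σ
  | .and φ ψ, σ => W φ σ ∧ W ψ σ
  | .or φ ψ, σ => W φ σ ∨ W ψ σ
  | .imp φ ψ, σ => W φ σ → W ψ σ
  | .next φ, σ => W φ (shift σ 1)
  | .ev φ, σ => ∃ i, W φ (shift σ i)
  | .always φ, σ => ∀ i, W φ (shift σ i)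
  | .until_ φ ψ, σ => ∃ j, W ψ (shift σ j) ∧ ∀ i, i < j → W φ (shift σ i)
  | .release φ ψ, σ => ∀ j, W ψ (shift σ j) ∨ ∃ i, i < j ∧ W φ (shift σ i)

/-- Syntax of rLTL formulae over atomic propositions `P` (robust operators). -/
inductive RLTL (P : Type*) where
  | tt : RLTL P
  | ff : RLTL P
  | atom : P → RLTL P
  | not : RLTL P → RLTL P
  | and : RLTL P → RLTL P → RLTL P
  | or : RLTL P → RLTL P → RLTL P
  | imp : RLTL P → RLTL P → RLTL P      -- robust implication ⟹
  | next : RLTL P → RLTL P              -- ⊙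
  | ev : RLTL P → RLTL P                -- ◇·
  | always : RLTL P → RLTL P            -- ⊡
  | until_ : RLTL P → RLTL P → RLTL P   -- U·
  | release : RLTL P → RLTL P → RLTL P  -- R·
  deriving DecidableEq

/-- The translation `ltl` of Table 1: `ltl φ k` is the LTL formula for bit `k+1`
(indices `0,1,2,3` correspond to the paper's bits `1,2,3,4`). -/
def ltl {P : Type*} : RLTL P → ℕ → LTL P
  | .tt, _ => .tt
  | .ff, _ => .ff
  | .atom p, _ => .atom p
  | .not φ, _ => .not (ltl φ 0)
  | .and φ ψ, k => .and (ltl φ k) (ltl ψ k)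
  | .or φ ψ, k => .or (ltl φ k) (ltl ψ k)
  | .imp φ ψ, 0 =>
      .and (.imp (ltl φ 0) (ltl ψ 0)) (.and (.imp (ltl φ 1) (ltl ψ 1))
        (.and (.imp (ltl φ 2) (ltl ψ 2)) (.imp (ltl φ 3) (ltl ψ 3))))
  | .imp φ ψ, 1 =>
      .and (.imp (ltl φ 1) (ltl ψ 1)) (.and (.imp (ltl φ 2) (ltl ψ 2)) (.imp (ltl φ 3) (ltl ψ 3)))
  | .imp φ ψ, 2 => .and (.imp (ltl φ 2) (ltl ψ 2)) (.imp (ltl φ 3) (ltl ψ 3))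
  | .imp φ ψ, (j+3) => .imp (ltl φ (j+3)) (ltl ψ (j+3))
  | .next φ, k => .next (ltl φ k)
  | .ev φ, k => .ev (ltl φ k)
  | .always φ, 0 => .always (ltl φ 0)
  | .always φ, 1 => .ev (.always (ltl φ 1))
  | .always φ, 2 => .always (.ev (ltl φ 2))
  | .always φ, (j+3) => .ev (ltl φ (j+3))
  | .until_ φ ψ, k => .until_ (ltl φ k) (ltl ψ k)
  | .release φ ψ, 0 => .release (ltl φ 0) (ltl ψ 0)
  | .release φ ψ, 1 => .or (.ev (ltl φ 1)) (.ev (.always (ltl ψ 1)))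
  | .release φ ψ, 2 => .or (.ev (ltl φ 2)) (.always (.ev (ltl ψ 2)))
  | .release φ ψ, (j+3) => .or (.ev (ltl φ (j+3))) (.ev (ltl ψ (j+3)))

/-- The rLTL semantics, bit-wise: `V φ σ k` is the truth value of bit `k+1`
(indices `0,…,3` correspond to the paper's bits `1,…,4`) of `V(σ,φ) ∈ B5`. -/
def V {P : Type*} : RLTL P → (ℕ → Set P) → ℕ → Prop
  | .tt, _, _ => True
  | .ff, _, _ => False
  | .atom p, σ, _ => p ∈ σ 0
  | .not φ, σ, _ => ¬ V φ σ 0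
  | .and φ ψ, σ, k => V φ σ k ∧ V ψ σ k
  | .or φ ψ, σ, k => V φ σ k ∨ V ψ σ k
  | .imp φ ψ, σ, k => ∀ j, k ≤ j → j ≤ 3 → (V φ σ j → V ψ σ j)
  | .next φ, σ, k => V φ (shift σ 1) k
  | .ev φ, σ, k => ∃ i, V φ (shift σ i) k
  | .always φ, σ, 0 => ∀ i, V φ (shift σ i) 0
  | .always φ, σ, 1 => ∃ j, ∀ i, j ≤ i → V φ (shift σ i) 1
  | .always φ, σ, 2 => ∀ j, ∃ i, j ≤ i ∧ V φ (shift σ i) 2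
  | .always φ, σ, (j+3) => ∃ i, V φ (shift σ i) (j+3)
  | .until_ φ ψ, σ, k => ∃ j, V ψ (shift σ j) k ∧ ∀ i, i < j → V φ (shift σ i) k
  | .release φ ψ, σ, 0 => ∀ j, V ψ (shift σ j) 0 ∨ ∃ i, i < j ∧ V φ (shift σ i) 0
  | .release φ ψ, σ, 1 =>
      ∃ m, ∀ j, m ≤ j → (V ψ (shift σ j) 1 ∨ ∃ i, i < j ∧ V φ (shift σ i) 1)
  | .release φ ψ, σ, 2 =>
      ∀ m, ∃ j, m ≤ j ∧ (V ψ (shift σ j) 2 ∨ ∃ i, i < j ∧ V φ (shift σ i) 2)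
  | .release φ ψ, σ, (j+3) =>
      ∃ m, V ψ (shift σ m) (j+3) ∨ ∃ i, i < m ∧ V φ (shift σ i) (j+3)

/-- for any infinite word `σ` and atomic proposition `p`, the rLTL
valuation of `⊡p` equals the 4-tuple of LTL valuations
`(W(σ,□p), W(σ,◇□p), W(σ,□◇p), W(σ,◇p))`. -/
theorem robust_always_atom_eq_LTL {P : Type*} (σ : ℕ → Set P) (p : P) :
    (V (.always (.atom p)) σ 0 ↔ W (.always (.atom p)) σ) ∧
    (V (.always (.atom p)) σ 1 ↔ W (.ev (.always (.atom p))) σ) ∧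
    (V (.always (.atom p)) σ 2 ↔ W (.always (.ev (.atom p))) σ) ∧
    (V (.always (.atom p)) σ 3 ↔ W (.ev (.atom p)) σ) := by
  refine ⟨?_, ?_, ?_, ?_⟩
  · simp [V, W, shift]
  · simp only [V, W, shift]
    constructor
    · rintro ⟨j, h⟩
      exact ⟨j, fun i => by simpa [Nat.add_assoc] using h (j + i) (Nat.le_add_right _ _)⟩
    · rintro ⟨j, h⟩
      refine ⟨j, fun i hi => ?_⟩
      have := h (i - j)
      simpa [Nat.add_sub_cancel' hi] using this
  · simp only [V, W, shift]
    constructor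
    · rintro h i
      obtain ⟨j, hj, hp⟩ := h i
      exact ⟨j - i, by simpa [Nat.add_sub_cancel' hj] using hp⟩
    · rintro h j
      obtain ⟨i, hi⟩ := h j
      exact ⟨j + i, Nat.le_add_right _ _, by simpa [Nat.add_assoc] using hi⟩
  · simp [V, W, shift]

end RLTLPaper
end

section
/- For atomic propositions p, q and any infinite word σ, the rLTL valuation of the robust release p R· q equals (W(σ, p R q), W(σ, ◇□q ∨ ◇p), W(σ, □◇q ∨ ◇p), W(σ, ◇q ∨ ◇p)), where W is the LTL valuation. -/
namespace RLTLPaper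

/-- for atomic propositions `p, q` and any infinite word `σ`, the
rLTL valuation of the robust release `p R· q` equals
`(W(σ, p R q), W(σ, ◇□q ∨ ◇p), W(σ, □◇q ∨ ◇p), W(σ, ◇q ∨ ◇p))`. -/
theorem robust_release_atom_eq_LTL {P : Type*} (σ : ℕ → Set P) (p q : P) :
    (V (.release (.atom p) (.atom q)) σ 0 ↔ W (.release (.atom p) (.atom q)) σ) ∧
    (V (.release (.atom p) (.atom q)) σ 1 ↔
      W (.or (.ev (.always (.atom q))) (.ev (.atom p))) σ) ∧
    (V (.release (.atom p) (.atom q)) σ 2 ↔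
      W (.or (.always (.ev (.atom q))) (.ev (.atom p))) σ) ∧
    (V (.release (.atom p) (.atom q)) σ 3 ↔
      W (.or (.ev (.atom q)) (.ev (.atom p))) σ) := by
  refine ⟨?_, ?_, ?_, ?_⟩
  · simp [V, W, shift]
  · simp only [V, W, shift]
    constructor
    · rintro ⟨m, hm⟩
      by_cases hp : ∃ i, p ∈ σ (i + 0)
      · exact Or.inr hp
      · refine Or.inl ⟨m, fun j => ?_⟩
        rcases hm (m + j) (Nat.le_add_right _ _) with h | ⟨i, _, hi⟩
        · simpa using h
        · exact absurd ⟨i, hi⟩ hp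
    · rintro (⟨i, hi⟩ | ⟨i, hi⟩)
      · refine ⟨i, fun j hj => Or.inl ?_⟩
        have := hi (j - i)
        simpa [Nat.add_sub_cancel' hj] using this
      · exact ⟨i + 1, fun j hj => Or.inr ⟨i, by omega, hi⟩⟩
  · simp only [V, W, shift]
    constructor
    · intro h
      by_cases hp : ∃ i, p ∈ σ (i + 0)
      · exact Or.inr hp
      · refine Or.inl fun i => ?_
        rcases h i with ⟨j, hij, hq | ⟨k, _, hk⟩⟩
        · exact ⟨j - i, by simpa [Nat.add_sub_cancel' hij] using hq⟩
        · exact absurd ⟨k, hk⟩ hp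
    · rintro (hq | ⟨i, hi⟩)
      · intro m
        rcases hq m with ⟨j, hj⟩
        exact ⟨m + j, Nat.le_add_right _ _, Or.inl (by simpa using hj)⟩
      · intro m
        exact ⟨m + i + 1, by omega, Or.inr ⟨i, by omega, hi⟩⟩
  · simp only [V, W, shift]
    constructor
    · rintro ⟨m, hq | ⟨i, _, hp⟩⟩
      · exact Or.inl ⟨m, hq⟩
      · exact Or.inr ⟨i, hp⟩
    · rintro (⟨m, hm⟩ | ⟨i, hi⟩)
      · exact ⟨m, Or.inl hm⟩
      · exact ⟨i + 1, Or.inr ⟨i, by omega, hi⟩⟩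

end RLTLPaper
end

section
/- For atomic propositions p and q, the valuation of ⊡◇·p over any infinite word σ can only take the three values 1111, 0001, or 0000; specifically, it equals (W(σ,□◇p), W(σ,□◇p), W(σ,□◇p), W(σ,◇p)). -/
namespace RLTLPaper

/-- for an atomic proposition `p`, the valuation of `⊡◇·p` equals
`(W(σ,□◇p), W(σ,□◇p), W(σ,□◇p), W(σ,◇p))`; in particular it can only take the
three values `1111`, `0001`, `0000`. -/
theorem robust_always_ev_atom {P : Type*} (σ : ℕ → Set P) (p : P) :
    (∀ k ≤ 2, (V (.always (.ev (.atom p))) σ k ↔ W (.always (.ev (.atom p))) σ)) ∧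
    (V (.always (.ev (.atom p))) σ 3 ↔ W (.ev (.atom p)) σ) := by
  constructor
  · intro k hk
    interval_cases k
    · simp [V, W, shift]
    · simp only [V, W, shift]
      constructor
      · rintro ⟨j, h⟩ i
        obtain ⟨m, hm⟩ := h (max i j) (le_max_right _ _)
        exact ⟨max i j - i + m, by
          have : max i j - i + i = max i j := Nat.sub_add_cancel (le_max_left _ _)
          rw [show i + (max i j - i + m + 0) = max i j + (m + 0) by omega]; exact hm⟩
      · intro h
        exact ⟨0, fun i _ => h i⟩
    · simp only [V, W, shift]
      constructor
      · intro h i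
        obtain ⟨j, hj, m, hm⟩ := h i
        exact ⟨j - i + m, by rw [show i + (j - i + m + 0) = j + (m + 0) by omega]; exact hm⟩
      · intro h j
        obtain ⟨m, hm⟩ := h j
        exact ⟨j, le_refl _, m, hm⟩
  · simp only [V, W, shift]
    constructor
    · rintro ⟨i, m, hm⟩; exact ⟨i + m, hm⟩
    · rintro ⟨n, hn⟩; exact ⟨n, 0, by simpa using hn⟩

end RLTLPaper
end

section
/- The LTL bit formulae of an rLTL formula are ordered: for every rLTL formula φ, infinite word σ, and indices i ≤ j in {1,2,3,4}, the valuation of the j-th associated LTL formula is at least that of the i-th: W(σ, ltl(i, φ)) ≤ W(σ, ltl(j, φ)). Equivalently, V(σ, φ) ∈ B5. -/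
namespace RLTLPaper

theorem shift_shift {P : Type*} (σ : ℕ → Set P) (i j : ℕ) :
    shift (shift σ i) j = shift σ (i + j) := by
  funext n; simp [shift, Nat.add_assoc]

theorem ltl_step {P : Type*} (φ : RLTL P) :
    ∀ (σ : ℕ → Set P) (k : ℕ), k ≤ 2 → W (ltl φ k) σ → W (ltl φ (k + 1)) σ := by
  induction φ with
  | tt => intro σ k _ h; interval_cases k <;> exact h
  | ff => intro σ k _ h; interval_cases k <;> exact h
  | atom p => intro σ k _ h; interval_cases k <;> exact h
  | not φ ih => intro σ k _ h; interval_cases k <;> exact h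
  | and φ ψ ihφ ihψ =>
    intro σ k hk h
    interval_cases k <;>
      exact ⟨ihφ σ _ (by omega) h.1, ihψ σ _ (by omega) h.2⟩
  | or φ ψ ihφ ihψ =>
    intro σ k hk h
    interval_cases k <;>
      exact h.elim (fun h1 => Or.inl (ihφ σ _ (by omega) h1))
        (fun h2 => Or.inr (ihψ σ _ (by omega) h2))
  | imp φ ψ ihφ ihψ =>
    intro σ k hk h
    interval_cases k
    · exact h.2
    · exact h.2
    · exact h.2
  | next φ ih =>
    intro σ k hk h
    interval_cases k <;> exact ih _ _ (by omega) h
  | ev φ ih =>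
    intro σ k hk h
    interval_cases k <;> exact h.imp fun i hi => ih _ _ (by omega) hi
  | always φ ih =>
    intro σ k hk h
    interval_cases k
    · -- □ → ◇□
      refine ⟨0, fun j => ?_⟩
      rw [shift_shift, Nat.zero_add]
      exact ih _ 0 (by omega) (h _)
    · -- ◇□ → □◇
      obtain ⟨i0, hi0⟩ := h
      intro i
      refine ⟨i0, ?_⟩
      have := hi0 i
      rw [shift_shift] at this ⊢
      rw [Nat.add_comm i i0]
      exact ih _ 1 (by omega) this
    · -- □◇ → ◇
      obtain ⟨j, hj⟩ := h 0
      exact ⟨j, ih _ 2 (by omega) (by rwa [shift_shift, Nat.zero_add] at hj)⟩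
  | until_ φ ψ ihφ ihψ =>
    intro σ k hk h
    interval_cases k <;>
      exact h.imp fun j hj =>
        ⟨ihψ _ _ (by omega) hj.1, fun i hi => ihφ _ _ (by omega) (hj.2 i hi)⟩
  | release φ ψ ihφ ihψ =>
    intro σ k hk h
    interval_cases k
    · -- R → ◇φ ∨ ◇□ψ
      by_cases hev : ∃ i, W (ltl φ 0) (shift σ i)
      · obtain ⟨i, hi⟩ := hev
        exact Or.inl ⟨i, ihφ _ 0 (by omega) hi⟩
      · push_neg at hev
        refine Or.inr ⟨0, fun j => ?_⟩
        have := (h (0 + j)).resolve_right ?_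
        · rw [shift_shift]; exact ihψ _ 0 (by omega) this
        · rintro ⟨i, _, hi⟩; exact hev i hi
    · -- ◇φ ∨ ◇□ψ → ◇φ ∨ □◇ψ
      rcases h with h | h
      · exact Or.inl (h.imp fun i hi => ihφ _ 1 (by omega) hi)
      · obtain ⟨i0, hi0⟩ := h
        refine Or.inr fun i => ⟨i0, ?_⟩
        have := hi0 i
        rw [shift_shift] at this ⊢
        rw [Nat.add_comm i i0]
        exact ihψ _ 1 (by omega) this
    · -- ◇φ ∨ □◇ψ → ◇φ ∨ ◇ψ
      rcases h with h | h
      · exact Or.inl (h.imp fun i hi => ihφ _ 2 (by omega) hi)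
      · obtain ⟨j, hj⟩ := h 0
        exact Or.inr ⟨j, ihψ _ 2 (by omega) (by rwa [shift_shift, Nat.zero_add] at hj)⟩

/-- the LTL bit formulae of an rLTL formula are ordered: for every
rLTL formula `φ`, infinite word `σ`, and bit indices `i ≤ j` (indices `0,…,3`
standing for the paper's bits `1,…,4`), `W(σ, ltl(i,φ)) ≤ W(σ, ltl(j,φ))`;
equivalently, `V(σ,φ) ∈ B5`. -/
theorem ltl_bits_monotone {P : Type*} (φ : RLTL P) (σ : ℕ → Set P) :
    ∀ i j : ℕ, i ≤ j → j ≤ 3 → W (ltl φ i) σ → W (ltl φ j) σ := by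
  intro i j hij hj h
  induction j, hij using Nat.le_induction with
  | base => exact h
  | succ n hn ih => exact ltl_step φ σ n (by omega) (ih (by omega))

end RLTLPaper
end

section
/- If an rLTL formula φ contains no robust always (⊡) and no robust release (R·) operators, then for every infinite word σ, V(σ, φ) ∈ {0000, 1111}; equivalently, the four associated LTL formulae ltl(1,φ),...,ltl(4,φ) are semantically equivalent. -/
namespace RLTLPaper

/-- `noAlwaysRelease φ` holds iff `φ` contains no robust always (⊡) and no
robust release (R·) operators. -/
def noAlwaysRelease {P : Type*} : RLTL P → Prop
  | .tt => True
  | .ff => True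
  | .atom _ => True
  | .not φ => noAlwaysRelease φ
  | .and φ ψ => noAlwaysRelease φ ∧ noAlwaysRelease ψ
  | .or φ ψ => noAlwaysRelease φ ∧ noAlwaysRelease ψ
  | .imp φ ψ => noAlwaysRelease φ ∧ noAlwaysRelease ψ
  | .next φ => noAlwaysRelease φ
  | .ev φ => noAlwaysRelease φ
  | .always _ => False
  | .until_ φ ψ => noAlwaysRelease φ ∧ noAlwaysRelease ψ
  | .release _ _ => False

set_option maxHeartbeats 2000000 in
lemma aux_two_valued {P : Type*} (φ : RLTL P) (h : noAlwaysRelease φ) :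
    ∀ (σ : ℕ → Set P) (i : ℕ), i ≤ 3 → (W (ltl φ i) σ ↔ W (ltl φ 0) σ) := by
  induction φ with
  | tt => intro σ i hi; rfl
  | ff => intro σ i hi; rfl
  | atom p => intro σ i hi; rfl
  | not φ ih => intro σ i hi; rfl
  | and φ ψ ihφ ihψ =>
      intro σ i hi
      simp only [ltl, W]
      rw [ihφ h.1 σ i hi, ihψ h.2 σ i hi]
  | or φ ψ ihφ ihψ =>
      intro σ i hi
      simp only [ltl, W]
      rw [ihφ h.1 σ i hi, ihψ h.2 σ i hi]
  | imp φ ψ ihφ ihψ =>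
      intro σ i hi
      have hφ := fun (k : ℕ) (hk : k ≤ 3) => ihφ h.1 σ k hk
      have hψ := fun (k : ℕ) (hk : k ≤ 3) => ihψ h.2 σ k hk
      have h1 := hφ 1 (by norm_num); have h2 := hφ 2 (by norm_num)
      have h3 := hφ 3 (by norm_num)
      have g1 := hψ 1 (by norm_num); have g2 := hψ 2 (by norm_num)
      have g3 := hψ 3 (by norm_num)
      interval_cases i
      · rfl
      · simp only [ltl, W]; rw [h1, h2, h3, g1, g2, g3]; tauto
      · simp only [ltl, W]; rw [h2, h3, g2, g3]; tauto
      · simp only [ltl, W]; rw [h3, g3]; tauto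
  | next φ ih =>
      intro σ i hi
      exact ih h (shift σ 1) i hi
  | ev φ ih =>
      intro σ i hi
      exact exists_congr fun k => ih h (shift σ k) i hi
  | always φ ih => exact absurd h (by simp [noAlwaysRelease])
  | until_ φ ψ ihφ ihψ =>
      intro σ i hi
      refine exists_congr fun j => and_congr (ihψ h.2 _ i hi) ?_
      exact forall_congr' fun k => imp_congr Iff.rfl (ihφ h.1 _ i hi)
  | release φ ψ ihφ ihψ => exact absurd h (by simp [noAlwaysRelease])

/-- if an rLTL formula `φ` contains no robust always (⊡) and no
robust release (R·) operators, then for every infinite word `σ`,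
`V(σ,φ) ∈ {0000, 1111}`; equivalently, the four associated LTL formulae
`ltl(1,φ), …, ltl(4,φ)` are semantically equivalent. -/
theorem two_valued_of_noAlwaysRelease {P : Type*} (φ : RLTL P)
    (h : noAlwaysRelease φ) (σ : ℕ → Set P) :
    ∀ i j : ℕ, i ≤ 3 → j ≤ 3 → (W (ltl φ i) σ ↔ W (ltl φ j) σ) := by
  intro i j hi hj
  rw [aux_two_valued φ h σ i hi, aux_two_valued φ h σ j hj]

end RLTLPaper
end
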